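/- If a word w over a finite vertex set V word-represents (0-11-represents) a simple graph G = (V, E), then the concatenation ww 1-11-represents G. In particular, every word-representable graph is 1-11-representable. -/
import Mathlib


/-- The subsequence of `w` consisting of all occurrences of `x` and `y`. -/
def restrictWord {V : Type*} [DecidableEq V] (w : List V) (x y : V) : List V :=
  w.filter (fun z => decide (z = x ∨ z = y))

/-- The number of occurrences of the consecutive pattern 11 in a word:
the number of indices `i` such that the `i`-th and `(i+1)`-th letters are equal. -/
def pattern11Count {V : Type*} [DecidableEq V] (l : List V) : ℕ :=
  ((l.zip l.tail).filter (fun p => decide (p.1 = p.2))).length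

/-- A word `w` over `V` `k`-11-represents the simple graph `G` if every vertex occurs in `w`
and, for all distinct `x y`, `xy` is an edge iff `w|_{x,y}` has at most `k` occurrences of
the pattern 11. -/
def Represents {V : Type*} [DecidableEq V] (k : ℕ) (w : List V) (G : SimpleGraph V) : Prop :=
  (∀ v : V, v ∈ w) ∧
  ∀ x y : V, x ≠ y → (G.Adj x y ↔ pattern11Count (restrictWord w x y) ≤ k)

/-- A graph is `k`-11-representable if some word `k`-11-represents it. -/
def Representable {V : Type*} [DecidableEq V] (k : ℕ) (G : SimpleGraph V) : Prop :=
  ∃ w : List V, Represents k w G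

/-- A word that is a permutation of the vertex set: each vertex occurs exactly once. -/
def IsPermWord {V : Type*} (p : List V) : Prop :=
  p.Nodup ∧ ∀ v : V, v ∈ p

/-- A graph is permutationally `k`-11-representable if some concatenation of permutations
of the vertex set `k`-11-represents it. -/
def PermRepresentable {V : Type*} [DecidableEq V] (k : ℕ) (G : SimpleGraph V) : Prop :=
  ∃ ps : List (List V), (∀ p ∈ ps, IsPermWord p) ∧ Represents k ps.flatten G

lemma pattern11Count_cons_cons {V : Type*} [DecidableEq V] (x y : V) (l : List V) :
    pattern11Count (x :: y :: l) = (if x = y then 1 else 0) + pattern11Count (y :: l) := by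
  simp only [pattern11Count, List.tail, List.zip_cons_cons, List.filter_cons]
  split <;> simp_all [Nat.add_comm]

lemma pattern11Count_le {V : Type*} [DecidableEq V] (a b : List V) :
    pattern11Count (a ++ b) ≤ pattern11Count a + pattern11Count b + 1 := by
  induction a with
  | nil => simp [pattern11Count]
  | cons x t ih =>
    cases t with
    | nil =>
      cases b with
      | nil => simp [pattern11Count]
      | cons z u =>
        rw [List.singleton_append, pattern11Count_cons_cons]
        have h0 : pattern11Count [x] = 0 := rfl
        split <;> omega
    | cons y u =>
      simp only [List.cons_append, pattern11Count_cons_cons] at *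
      split <;> omega

lemma pattern11Count_ge {V : Type*} [DecidableEq V] (a b : List V) :
    pattern11Count a + pattern11Count b ≤ pattern11Count (a ++ b) := by
  induction a with
  | nil => simp [pattern11Count]
  | cons x t ih =>
    cases t with
    | nil =>
      cases b with
      | nil => simp [pattern11Count]
      | cons z u =>
        rw [List.singleton_append, pattern11Count_cons_cons]
        have h0 : pattern11Count [x] = 0 := rfl
        split <;> omega
    | cons y u =>
      simp only [List.cons_append, pattern11Count_cons_cons] at *
      split <;> omega

/-- if a word `w` word-represents (0-11-represents) a graph `G`, then the
concatenation `ww` 1-11-represents `G`; in particular, every word-representable graph is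
1-11-representable. -/
theorem stmt14 {V : Type*} [Fintype V] [DecidableEq V] (G : SimpleGraph V) :
    (∀ w : List V, Represents 0 w G → Represents 1 (w ++ w) G) ∧
    (Representable 0 G → Representable 1 G) := by
  have main : ∀ w : List V, Represents 0 w G → Represents 1 (w ++ w) G := by
    rintro w ⟨hmem, hadj⟩
    refine ⟨fun v => by simp [hmem v], fun x y hxy => ?_⟩
    have hr : restrictWord (w ++ w) x y = restrictWord w x y ++ restrictWord w x y := by
      simp [restrictWord, List.filter_append]
    rw [hr, hadj x y hxy]
    have h1 := pattern11Count_le (restrictWord w x y) (restrictWord w x y)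
    have h2 := pattern11Count_ge (restrictWord w x y) (restrictWord w x y)
    omega
  exact ⟨main, fun ⟨w, hw⟩ => ⟨w ++ w, main w hw⟩⟩
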